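/- Let p be in A_h (i.e. Σ_v |p^v| h_T(v) < ∞) and q an element of the extended tensor algebra over ℝ^d with q^∅ = 0, such that q is dominated (coefficient-wise in absolute value) by a⊗exp^{⧢}(b) or by exp^{⧢}(b)⊗a for some linear combinations of single letters a and b. Then the resolvent (∅-q)^{-1} is well-defined and lies in A_h, and the unique solution ℓ = p⊗(∅-q)^{-1} of ℓ = p + ℓ⊗q lies in A_h. -/

import Mathlib

open scoped BigOperators

/-- Words over the alphabet `Fin d`. -/
abbrev Word (d : ℕ) := List (Fin d)

/-- The extended tensor algebra over `ℝ^d`, viewed as coefficient functions on words. -/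
abbrev ETA (d : ℕ) := Word d → ℝ

namespace ETA

variable {d : ℕ}

/-- The unit (empty word) element `∅`. -/
noncomputable def unit (d : ℕ) : ETA d := fun v => if v = [] then 1 else 0

/-- Concatenation (tensor) product. -/
noncomputable def concat (p q : ETA d) : ETA d :=
  fun v => ∑ k ∈ Finset.range (v.length + 1), p (v.take k) * q (v.drop k)

/-- Concatenation powers. -/
noncomputable def cpow (p : ETA d) : ℕ → ETA d
  | 0 => unit d
  | n + 1 => concat (cpow p n) p

/-- Shuffle product of two words as a multiset of words. -/
def shuffleW {A : Type*} : List A → List A → Multiset (List A)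
  | [], w => {w}
  | u, [] => {u}
  | a :: u, b :: w =>
      (shuffleW u (b :: w)).map (a :: ·) + (shuffleW (a :: u) w).map (b :: ·)
  termination_by u w => u.length + w.length
  decreasing_by all_goals (simp only [List.length_cons]; omega)

/-- The finset of all words of length `n` over `Fin d`. -/
noncomputable def wordsLen (d n : ℕ) : Finset (Word d) :=
  Finset.image (fun f : Fin n → Fin d => List.ofFn f) Finset.univ

/-- Shuffle product on the extended tensor algebra (coefficient-wise finite sums). -/
noncomputable def shuffle (p q : ETA d) : ETA d :=
  fun v => ∑ k ∈ Finset.range (v.length + 1),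
    ∑ u ∈ wordsLen d k, ∑ w ∈ wordsLen d (v.length - k),
      p u * q w * ((shuffleW u w).count v : ℝ)

/-- Shuffle powers. -/
noncomputable def spow (p : ETA d) : ℕ → ETA d
  | 0 => unit d
  | n + 1 => shuffle (spow p n) p

/-- A linear combination of single letters `Σ_i c i • e_i`. -/
def letters (c : Fin d → ℝ) : ETA d := fun v =>
  match v with
  | [i] => c i
  | _ => 0

/-- A single letter `e_i`. -/
noncomputable def letter (i : Fin d) : ETA d := fun v => if v = [i] then 1 else 0

/-- The resolvent `(∅ - q)⁻¹ = Σ_n q^{⊗n}`, defined coefficient-wise. -/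
noncomputable def res (q : ETA d) : ETA d := fun v => ∑' n, cpow q n v

/-- The shuffle exponential `exp^⧢(b) = Σ_n b^{⧢n}/n!`, defined coefficient-wise. -/
noncomputable def shuexp (b : ETA d) : ETA d := fun v => ∑' n, spow b n v / (Nat.factorial n : ℝ)

/-- Right projection `ℓ|_i`, removing a terminal letter `i`. -/
def proj (p : ETA d) (i : Fin d) : ETA d := fun v => p (v ++ [i])

end ETA

/-- The dominating function `h_t(v) = C (n+1)^{-1/4} (2t)^{(n+x)/2} / √((n+x-1)!)`,
where `n` is the length of `v` and `x` the number of occurrences of the distinguished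
letter `0` (the time letter), with the convention `m! = 1` for `m ≤ 0`. -/
noncomputable def hfun {d : ℕ} [NeZero d] (C t : ℝ) (v : Word d) : ℝ :=
  C * ((v.length : ℝ) + 1) ^ (-(1/4 : ℝ)) *
    (2 * t) ^ (((v.length + v.count 0 : ℕ) : ℝ) / 2) /
      Real.sqrt (Nat.factorial (v.length + v.count 0 - 1))

/-!
The domination hypothesis is only used through a geometric bound: the coefficients of
`exp^⧢(b)` are at most `(∑ |bᵢ|)^|v|` (a word of length `n` arises in at most `n!` ways as
a shuffle of `n` letters), so `|q v| ≤ M^|v|` with `M = ∑ |aᵢ| + ∑ |bᵢ|`. As `q^∅ = 0`, the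
resolvent `R` is a finite sum on each word and satisfies `R = ∅ + R ⊗ q`; induction on the
length then gives `|R v| ≤ (2M)^|v|`. The weight `h_T(v)` decays like `1/√((|v|-1)!)`,
faster than any geometric sequence, so `R ∈ A_h`. Finally `h_T(uw) ≤ h_T(u) h_T(w)`, so `A_h`
is closed under `⊗` and `p ⊗ R ∈ A_h`, while `ℓ = p + ℓ ⊗ q` is `R = ∅ + R ⊗ q` multiplied by
`p` on the left.
-/

namespace ETA

open Finset Nat

variable {d : ℕ}

theorem mem_wordsLen {u : Word d} {n : ℕ} : u ∈ wordsLen d n ↔ u.length = n := by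
  simp only [wordsLen, Finset.mem_image, Finset.mem_univ, true_and]
  exact ⟨by rintro ⟨f, rfl⟩; simp, fun h => ⟨h ▸ u.get, by subst h; simp⟩⟩

theorem wordsLen_one : wordsLen d 1 = univ.map ⟨fun j => [j], List.singleton_injective⟩ := by
  ext u
  rw [mem_wordsLen, List.length_eq_one_iff]
  simp [eq_comm]

theorem shuffleW_singleton_right {A : Type*} (j : A) (u : List A) :
    shuffleW u [j] = (Multiset.range (u.length + 1)).map fun i => u.insertIdx i j := by
  induction u with
  | nil => simp [shuffleW]
  | cons a u ih =>
    rw [shuffleW.eq_3, ih, List.length_cons, Multiset.range, Multiset.range,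
      List.range_succ_eq_map (n := u.length + 1)]
    simp [shuffleW, List.map_map, Function.comp_def, add_comm]

theorem sum_count_shuffleW_singleton_le (j : Fin d) (v : Word d) (n : ℕ) :
    ∑ u ∈ wordsLen d n, (shuffleW u [j]).count v ≤ n + 1 := by
  calc ∑ u ∈ wordsLen d n, (shuffleW u [j]).count v
      = ∑ i ∈ range (n + 1), #{u ∈ wordsLen d n | v = u.insertIdx i j} := by
        simp_rw [card_filter]
        rw [sum_comm]
        refine sum_congr rfl fun u hu => ?_
        rw [shuffleW_singleton_right, mem_wordsLen.1 hu, Multiset.count_map, ← card_filter]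
        rfl
    _ ≤ ∑ i ∈ range (n + 1), 1 := by
        gcongr with i
        refine card_le_one.mpr fun u hu w hw => ?_
        rw [← List.eraseIdx_insertIdx_self (i := i) j (l := u), ← (mem_filter.mp hu).2,
          (mem_filter.mp hw).2, List.eraseIdx_insertIdx_self]
    _ = n + 1 := by simp

section Letters

variable (b : Fin d → ℝ)

theorem letters_eq_zero {v : Word d} (h : v.length ≠ 1) : letters b v = 0 := by
  match v, h with
  | [], _ => rfl
  | _ :: _ :: _, _ => rfl

theorem abs_letters_le_pow (v : Word d) : |letters b v| ≤ (∑ i, |b i|) ^ v.length := by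
  match v with
  | [i] => simpa [letters] using single_le_sum (fun i _ => abs_nonneg (b i)) (mem_univ i)
  | [] | _ :: _ :: _ => simp only [letters, abs_zero]; positivity

theorem shuffle_letters_nil (p : ETA d) : shuffle p (letters b) [] = 0 := by
  simp [shuffle, letters, wordsLen]

theorem shuffle_letters_of_length_eq_succ (p : ETA d) {v : Word d} {n : ℕ}
    (hv : v.length = n + 1) :
    shuffle p (letters b) v
      = ∑ u ∈ wordsLen d n, ∑ j, p u * b j * ((shuffleW u [j]).count v : ℝ) := by
  rw [shuffle, sum_eq_single_of_mem n (by simp [hv])]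
  · rw [hv, Nat.add_sub_cancel_left, wordsLen_one]
    simp [letters]
  · intro k _ hkn
    refine sum_eq_zero fun u _ => sum_eq_zero fun w hw => ?_
    rw [letters_eq_zero b (by rw [mem_wordsLen.1 hw]; omega), mul_zero, zero_mul]

theorem spow_letters_eq_zero {n : ℕ} {v : Word d} (h : v.length ≠ n) :
    spow (letters b) n v = 0 := by
  induction n generalizing v with
  | zero => simp [spow, unit, List.length_eq_zero_iff.not.mp h]
  | succ n ih =>
    obtain rfl | ⟨m, hm⟩ : v = [] ∨ ∃ m, v.length = m + 1 := by
      cases v <;> simp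
    · rw [spow, shuffle_letters_nil]
    · rw [spow, shuffle_letters_of_length_eq_succ b _ hm]
      refine sum_eq_zero fun u hu => sum_eq_zero fun j _ => ?_
      rw [ih (by rw [mem_wordsLen.1 hu]; omega), zero_mul, zero_mul]

theorem abs_spow_letters_le (n : ℕ) (v : Word d) :
    |spow (letters b) n v| ≤ n ! * (∑ i, |b i|) ^ n := by
  induction n generalizing v with
  | zero => by_cases hv : v = [] <;> simp [spow, unit, hv]
  | succ n ih =>
    by_cases hv : v.length = n + 1
    swap
    · rw [spow_letters_eq_zero b hv, abs_zero]; positivity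
    rw [spow, shuffle_letters_of_length_eq_succ b _ hv]
    calc |∑ u ∈ wordsLen d n, ∑ j, spow (letters b) n u * b j * ((shuffleW u [j]).count v : ℝ)|
        ≤ ∑ u ∈ wordsLen d n, ∑ j,
            n ! * (∑ i, |b i|) ^ n * |b j| * ((shuffleW u [j]).count v : ℝ) := by
          refine (abs_sum_le_sum_abs _ _).trans (sum_le_sum fun u _ => ?_)
          refine (abs_sum_le_sum_abs _ _).trans (sum_le_sum fun j _ => ?_)
          rw [abs_mul, abs_mul, Nat.abs_cast]
          gcongr
          exact ih u
      _ = n ! * (∑ i, |b i|) ^ n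
            * ∑ j, |b j| * ((∑ u ∈ wordsLen d n, (shuffleW u [j]).count v : ℕ) : ℝ) := by
          rw [sum_comm, mul_sum]
          simp_rw [Nat.cast_sum, mul_sum, mul_assoc]
      _ ≤ n ! * (∑ i, |b i|) ^ n * ∑ j, |b j| * (n + 1 : ℝ) := by
          gcongr with j
          exact_mod_cast sum_count_shuffleW_singleton_le j v n
      _ = (n + 1)! * (∑ i, |b i|) ^ (n + 1) := by
          rw [← sum_mul, Nat.factorial_succ]
          push_cast
          ring

theorem shuexp_letters_eq (v : Word d) :
    shuexp (letters b) v = spow (letters b) v.length v / v.length ! :=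
  tsum_eq_single v.length fun n hn => by rw [spow_letters_eq_zero b (Ne.symm hn), zero_div]

theorem abs_shuexp_letters_le_pow (v : Word d) :
    |shuexp (letters b) v| ≤ (∑ i, |b i|) ^ v.length := by
  rw [shuexp_letters_eq, abs_div, Nat.abs_cast, div_le_iff₀ (by positivity), mul_comm]
  exact abs_spow_letters_le b _ v

end Letters

section Concat

theorem concat_add_right (p q r : ETA d) : concat p (q + r) = concat p q + concat p r := by
  ext v
  simp [concat, mul_add, sum_add_distrib]

theorem concat_unit_right (p : ETA d) : concat p (unit d) = p := by
  ext v
  rw [concat, sum_eq_single_of_mem v.length (self_mem_range_succ _)]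
  · simp [unit]
  · intro k hk hkv
    have : v.drop k ≠ [] := by simp at hk ⊢; omega
    simp [unit, this]

theorem concat_assoc (p r s : ETA d) : concat (concat p r) s = concat p (concat r s) := by
  ext v
  have hflip := sum_range_diag_flip (v.length + 1) fun j i =>
    p (v.take j) * r ((v.drop j).take i) * s ((v.drop j).drop i)
  simp only [concat, sum_mul, mul_sum, ← mul_assoc]
  convert hflip using 2 with k hk j hj
  · rw [mem_range] at hk
    rw [List.length_take_of_le (by omega)]
    refine sum_congr rfl fun i hi => ?_
    rw [mem_range] at hi
    rw [List.take_take, min_eq_left (by omega), List.drop_take, List.drop_drop,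
      Nat.add_sub_cancel' (by omega)]
  · rw [mem_range] at hj
    rw [List.length_drop, Nat.sub_add_comm (by omega)]

end Concat

section Resolvent

variable {q : ETA d}

theorem cpow_eq_zero_of_length_lt (hq : q [] = 0) {n : ℕ} {v : Word d} (hv : v.length < n) :
    cpow q n v = 0 := by
  induction n generalizing v with
  | zero => omega
  | succ n ih =>
    refine (sum_eq_zero fun k hk => ?_ : concat _ q v = 0)
    rw [mem_range] at hk
    rcases Nat.lt_succ_iff_lt_or_eq.mp hk with hk | rfl
    · rw [ih (by rw [List.length_take]; omega), zero_mul]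
    · rw [List.drop_length, hq, mul_zero]

theorem res_eq_sum_range (hq : q [] = 0) {N : ℕ} {v : Word d} (hv : v.length < N) :
    res q v = ∑ n ∈ range N, cpow q n v :=
  tsum_eq_sum fun n hn => cpow_eq_zero_of_length_lt hq (by simp at hn; omega)

theorem res_eq_unit_add_concat (hq : q [] = 0) : res q = unit d + concat (res q) q := by
  ext v
  have hprefix : ∀ k ∈ range (v.length + 1),
      res q (v.take k) = ∑ n ∈ range (v.length + 1), cpow q n (v.take k) := fun k _ =>
    res_eq_sum_range hq (by simp)
  rw [Pi.add_apply, concat, sum_congr rfl fun k hk => by rw [hprefix k hk, sum_mul], sum_comm,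
    res_eq_sum_range hq (by omega : v.length < v.length + 2), sum_range_succ', add_comm]
  rfl

theorem concat_res_eq (hq : q [] = 0) (p : ETA d) :
    concat p (res q) = p + concat (concat p (res q)) q := by
  conv_lhs => rw [res_eq_unit_add_concat hq]
  rw [concat_add_right, concat_unit_right, concat_assoc]

end Resolvent

section GeometricBounds

theorem abs_concat_le (f g : ETA d) (v : Word d) :
    |concat f g v| ≤ ∑ k ∈ range (v.length + 1), |f (v.take k)| * |g (v.drop k)| :=
  (abs_sum_le_sum_abs _ _).trans_eq (by simp only [abs_mul])

theorem abs_concat_le_pow {f g : ETA d} {α β : ℝ} (hα : 0 ≤ α) (hβ : 0 ≤ β)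
    (hf : ∀ w, |f w| ≤ α ^ w.length) (hg : ∀ w, |g w| ≤ β ^ w.length) (v : Word d) :
    |concat f g v| ≤ (α + β) ^ v.length := by
  rw [add_pow]
  refine (abs_concat_le f g v).trans (sum_le_sum fun k hk => ?_)
  rw [mem_range] at hk
  calc |f (v.take k)| * |g (v.drop k)| ≤ α ^ k * β ^ (v.length - k) := by
        gcongr
        · simpa [List.length_take_of_le (Nat.lt_succ_iff.mp hk)] using hf (v.take k)
        · simpa using hg (v.drop k)
    _ ≤ α ^ k * β ^ (v.length - k) * v.length.choose k :=
        le_mul_of_one_le_right (by positivity)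
          (by exact_mod_cast Nat.choose_pos (Nat.lt_succ_iff.mp hk))

theorem abs_le_pow_of_dominated {q : ETA d} (a b : Fin d → ℝ)
    (hdom : (∀ v, |q v| ≤ concat (letters a) (shuexp (letters b)) v) ∨
      (∀ v, |q v| ≤ concat (shuexp (letters b)) (letters a) v)) (v : Word d) :
    |q v| ≤ (∑ i, |a i| + ∑ i, |b i|) ^ v.length := by
  have hA : 0 ≤ ∑ i, |a i| := by positivity
  have hB : 0 ≤ ∑ i, |b i| := by positivity
  rcases hdom with hdom | hdom <;> refine (hdom v).trans ((le_abs_self _).trans ?_)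
  · exact abs_concat_le_pow hA hB (abs_letters_le_pow a) (abs_shuexp_letters_le_pow b) v
  · rw [add_comm]
    exact abs_concat_le_pow hB hA (abs_shuexp_letters_le_pow b) (abs_letters_le_pow a) v

theorem abs_res_le_pow {q : ETA d} {M : ℝ} (hM : 0 ≤ M) (hq0 : q [] = 0)
    (hq : ∀ w, |q w| ≤ M ^ w.length) (v : Word d) : |res q v| ≤ (2 * M) ^ v.length := by
  induction hn : v.length using Nat.strong_induction_on generalizing v with
  | _ n ih =>
  have hunit : |unit d v| ≤ M ^ n := by
    by_cases hv : v = []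
    · simp [unit, hv] at hn ⊢; simp [← hn]
    · simp only [unit, hv, if_false, abs_zero]; positivity
  have hsum : ∑ k ∈ range (n + 1), |res q (v.take k)| * |q (v.drop k)|
      ≤ ∑ k ∈ range n, (2 : ℝ) ^ k * M ^ n := by
    rw [sum_range_succ, ← hn, List.drop_length, hq0, abs_zero, mul_zero, add_zero, hn]
    refine sum_le_sum fun k hk => ?_
    rw [mem_range] at hk
    calc |res q (v.take k)| * |q (v.drop k)| ≤ (2 * M) ^ k * M ^ (n - k) := by
          gcongr
          · exact ih k hk _ (by simp; omega)
          · simpa [hn] using hq (v.drop k)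
      _ = 2 ^ k * M ^ n := by rw [mul_pow, mul_assoc, ← pow_add, Nat.add_sub_cancel' hk.le]
  have hgeom : ∑ k ∈ range n, (2 : ℝ) ^ k = 2 ^ n - 1 := by
    rw [geom_sum_eq (by norm_num)]; norm_num
  calc |res q v| = |unit d v + concat (res q) q v| := by
        rw [← Pi.add_apply, ← res_eq_unit_add_concat hq0]
    _ ≤ |unit d v| + ∑ k ∈ range (n + 1), |res q (v.take k)| * |q (v.drop k)| := by
        rw [← hn]
        exact (abs_add_le _ _).trans (by gcongr; exact abs_concat_le _ _ v)
    _ ≤ M ^ n + (2 ^ n - 1) * M ^ n := by rw [← hgeom, sum_mul]; gcongr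
    _ ≤ (2 * M) ^ n := by rw [mul_pow]; linarith

end GeometricBounds

section Weight

theorem sq_factorial_pred_mul_le {n m N M : ℕ} (hn : 1 ≤ n) (hm : 1 ≤ m) (hnN : n ≤ N)
    (hmM : m ≤ M) : (n + 1) * (m + 1) * ((N - 1)! * (M - 1)!) ^ 2 ≤ 4 * (N + M - 1)! ^ 2 := by
  have hfac : (N - 1)! * (M - 1)! * (N + M - 1) ≤ (N + M - 1)! := by
    have hdvd := Nat.factorial_mul_factorial_dvd_factorial_add (N - 1) (M - 1)
    rw [show N - 1 + (M - 1) = N + M - 1 - 1 by omega] at hdvd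
    rw [← Nat.mul_factorial_pred (by omega : N + M - 1 ≠ 0), mul_comm _ (N + M - 1)]
    exact Nat.mul_le_mul_left _ (Nat.le_of_dvd (Nat.factorial_pos _) hdvd)
  have hweights : (n + 1) * (m + 1) ≤ 4 * (N + M - 1) ^ 2 := by
    have : n + m ≤ N + M - 1 + 1 := by omega
    nlinarith
  calc (n + 1) * (m + 1) * ((N - 1)! * (M - 1)!) ^ 2
      ≤ 4 * (N + M - 1) ^ 2 * ((N - 1)! * (M - 1)!) ^ 2 := by gcongr
    _ = 4 * ((N - 1)! * (M - 1)! * (N + M - 1)) ^ 2 := by ring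
    _ ≤ 4 * (N + M - 1)! ^ 2 := by gcongr

noncomputable def hweight (n N : ℕ) : ℝ := ((n : ℝ) + 1) ^ (-(1 / 4 : ℝ)) / √((N - 1)! : ℝ)

theorem hweight_nonneg (n N : ℕ) : 0 ≤ hweight n N := by unfold hweight; positivity

theorem hweight_pow_four (n N : ℕ) :
    hweight n N ^ 4 = (((n : ℝ) + 1) * ((N - 1)! : ℝ) ^ 2)⁻¹ := by
  rw [hweight, div_pow, ← Real.rpow_mul_natCast (by positivity),
    show (√((N - 1)! : ℝ)) ^ 4 = ((N - 1)! : ℝ) ^ 2 by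
      rw [show 4 = 2 * 2 by rfl, pow_mul, Real.sq_sqrt (by positivity)]]
  norm_num [Real.rpow_neg_one, mul_inv]
  ring

theorem hweight_add_le {C : ℝ} (hC : 2 ≤ C) {n m N M : ℕ} (hnN : n ≤ N) (hN : N ≤ 2 * n)
    (hmM : m ≤ M) (hM : M ≤ 2 * m) :
    hweight (n + m) (N + M) ≤ C * hweight n N * hweight m M := by
  rcases Nat.eq_zero_or_pos n with rfl | hn
  · obtain rfl : N = 0 := by omega
    simpa [hweight] using le_mul_of_one_le_left (hweight_nonneg m M) (by linarith)
  rcases Nat.eq_zero_or_pos m with rfl | hm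
  · obtain rfl : M = 0 := by omega
    simpa [hweight] using le_mul_of_one_le_left (hweight_nonneg n N) (by linarith)
  -- the fourth power clears the exponent `-1/4` and the square roots
  rw [← pow_le_pow_iff_left₀ (hweight_nonneg _ _)
    (mul_nonneg (mul_nonneg (by linarith) (hweight_nonneg _ _)) (hweight_nonneg _ _)) four_ne_zero,
    mul_pow, mul_pow, hweight_pow_four, hweight_pow_four, hweight_pow_four]
  have key : ((n + 1) * (m + 1) * ((N - 1)! * (M - 1)!) ^ 2 : ℝ) ≤ 4 * (N + M - 1)! ^ 2 := by
    exact_mod_cast sq_factorial_pred_mul_le hn hm hnN hmM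
  have hC4 : (16 : ℝ) ≤ C ^ 4 := by
    calc (16 : ℝ) = 2 ^ 4 := by norm_num
      _ ≤ C ^ 4 := by gcongr
  calc (((n + m : ℕ) + 1) * ((N + M - 1)! : ℝ) ^ 2)⁻¹
      ≤ (((n + 1) * ((N - 1)! : ℝ) ^ 2) * ((m + 1) * ((M - 1)! : ℝ) ^ 2) / C ^ 4)⁻¹ := by
        refine inv_anti₀ (by positivity) ?_
        rw [div_le_iff₀ (by positivity)]
        have hF : (0 : ℝ) ≤ ((N + M - 1)! : ℝ) ^ 2 := by positivity
        calc ((n + 1) * ((N - 1)! : ℝ) ^ 2) * ((m + 1) * ((M - 1)! : ℝ) ^ 2)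
            = (n + 1) * (m + 1) * ((N - 1)! * (M - 1)! : ℝ) ^ 2 := by ring
          _ ≤ 1 * ((N + M - 1)! : ℝ) ^ 2 * 16 := by linarith
          _ ≤ ((n + m : ℕ) + 1) * ((N + M - 1)! : ℝ) ^ 2 * C ^ 4 := by
            gcongr
            simp only [Nat.cast_add, le_add_iff_nonneg_left]
            positivity
    _ = C ^ 4 * ((n + 1) * ((N - 1)! : ℝ) ^ 2)⁻¹ * ((m + 1) * ((M - 1)! : ℝ) ^ 2)⁻¹ := by
        rw [inv_div, div_eq_mul_inv, mul_inv, mul_assoc]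

end Weight

section Hfun

variable [NeZero d] {C T : ℝ}

theorem hfun_eq (v : Word d) :
    hfun C T v = C * (2 * T) ^ (((v.length + v.count 0 : ℕ) : ℝ) / 2)
      * hweight v.length (v.length + v.count 0) := by
  rw [hfun, hweight]
  ring

theorem hfun_nonneg (hC : 0 ≤ C) (hT : 0 ≤ T) (v : Word d) : 0 ≤ hfun C T v := by
  rw [hfun_eq]
  have := hweight_nonneg v.length (v.length + v.count 0)
  positivity

theorem hfun_append_le (hC : 2 ≤ C) (hT : 0 < T) (u w : Word d) :
    hfun C T (u ++ w) ≤ hfun C T u * hfun C T w := by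
  have hu := List.count_le_length (a := (0 : Fin d)) (l := u)
  have hw := List.count_le_length (a := (0 : Fin d)) (l := w)
  have hlen : (u ++ w).length + (u ++ w).count 0
      = (u.length + u.count 0) + (w.length + w.count 0) := by
    rw [List.length_append, List.count_append]; omega
  have hexp : (2 * T) ^ ((((u.length + u.count 0) + (w.length + w.count 0) : ℕ) : ℝ) / 2)
      = (2 * T) ^ (((u.length + u.count 0 : ℕ) : ℝ) / 2)
        * (2 * T) ^ (((w.length + w.count 0 : ℕ) : ℝ) / 2) := by
    rw [← Real.rpow_add (by linarith)]; congr 1; push_cast; ring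
  rw [hfun_eq, hfun_eq, hfun_eq, hlen, hexp, List.length_append]
  calc C * ((2 * T) ^ (((u.length + u.count 0 : ℕ) : ℝ) / 2)
        * (2 * T) ^ (((w.length + w.count 0 : ℕ) : ℝ) / 2))
        * hweight (u.length + w.length) ((u.length + u.count 0) + (w.length + w.count 0))
      ≤ C * ((2 * T) ^ (((u.length + u.count 0 : ℕ) : ℝ) / 2)
        * (2 * T) ^ (((w.length + w.count 0 : ℕ) : ℝ) / 2))
        * (C * hweight u.length (u.length + u.count 0)
          * hweight w.length (w.length + w.count 0)) := by
        gcongr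
        exact hweight_add_le hC (by omega) (by omega) (by omega) (by omega)
    _ = _ := by ring

theorem hfun_le_pow (hC : 0 ≤ C) (hT : 0 ≤ T) (v : Word d) :
    hfun C T v ≤ C * (1 + 2 * T) ^ v.length / √((v.length - 1)! : ℝ) := by
  have hcount := List.count_le_length (a := (0 : Fin d)) (l := v)
  calc hfun C T v ≤ C * 1 * (1 + 2 * T) ^ (v.length : ℝ) / √((v.length - 1)! : ℝ) := by
        rw [hfun]
        gcongr
        · exact Real.rpow_le_one_of_one_le_of_nonpos (by simp) (by norm_num)
        · calc (2 * T) ^ (((v.length + v.count 0 : ℕ) : ℝ) / 2)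
              ≤ (1 + 2 * T) ^ (((v.length + v.count 0 : ℕ) : ℝ) / 2) := by gcongr; linarith
            _ ≤ (1 + 2 * T) ^ (v.length : ℝ) := by
              gcongr
              · linarith
              · push_cast
                linarith [(Nat.cast_le (α := ℝ)).mpr hcount]
        · omega
    _ = C * (1 + 2 * T) ^ v.length / √((v.length - 1)! : ℝ) := by
        rw [mul_one, Real.rpow_natCast]

end Hfun

section Summability

theorem summable_pow_div_sqrt_factorial (K : ℝ) : Summable fun n : ℕ => K ^ n / √(n ! : ℝ) := by
  refine ((Real.summable_pow_div_factorial (2 * K ^ 2)).add summable_geometric_two)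
    |>.of_norm_bounded fun n => ?_
  set t := |K| ^ n / √(n ! : ℝ)
  have hsq : (2 * K ^ 2) ^ n / n ! = 2 ^ n * t ^ 2 := by
    rw [div_pow, Real.sq_sqrt (by positivity), ← pow_mul, mul_comm n 2, pow_mul, sq_abs, mul_pow,
      mul_div_assoc]
  rw [Real.norm_eq_abs, abs_div, abs_pow, abs_of_nonneg (Real.sqrt_nonneg _), hsq, one_div,
    inv_pow]
  -- AM–GM for `2ⁿ t²` and `2⁻ⁿ`
  rw [← sub_nonneg,
    show 2 ^ n * t ^ 2 + (2 ^ n)⁻¹ - t = ((2 ^ n * t - 1) ^ 2 + 2 ^ n * t) / 2 ^ n by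
      field_simp; ring]
  positivity

theorem summable_pow_div_sqrt_factorial_pred (K : ℝ) :
    Summable fun n : ℕ => K ^ n / √((n - 1)! : ℝ) := by
  rw [← summable_nat_add_iff 1]
  simpa [pow_succ, mul_div_assoc, mul_comm] using (summable_pow_div_sqrt_factorial K).mul_left K

theorem summable_comp_length {F : ℕ → ℝ} (hF : ∀ n, 0 ≤ F n)
    (h : Summable fun n : ℕ => (d : ℝ) ^ n * F n) : Summable fun v : Word d => F v.length := by
  rw [← (List.equivSigmaTuple (α := Fin d)).symm.summable_iff]
  refine (summable_sigma_of_nonneg fun x => hF _).mpr ⟨fun n => .of_finite, ?_⟩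
  simpa [List.equivSigmaTuple] using h

theorem summable_sum_take_drop {A : Type*} {F : List A × List A → ℝ} (hF : Summable F) :
    Summable fun v : List A => ∑ k ∈ range (v.length + 1), F (v.take k, v.drop k) := by
  have hinj : Function.Injective fun x : Σ v : List A, Fin (v.length + 1) =>
      (x.1.take x.2, x.1.drop x.2) := by
    rintro ⟨v, k⟩ ⟨w, l⟩ h
    simp only [Prod.mk.injEq] at h
    obtain rfl : v = w := by rw [← List.take_append_drop k v, h.1, h.2, List.take_append_drop]
    have := congrArg List.length h.1
    simp only [List.length_take, Nat.min_eq_left (Nat.lt_succ_iff.mp k.2),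
      Nat.min_eq_left (Nat.lt_succ_iff.mp l.2)] at this
    rw [Fin.ext this]
  refine (hF.comp_injective hinj).sigma.congr fun v => ?_
  rw [tsum_fintype, ← Fin.sum_univ_eq_sum_range (fun k => F (v.take k, v.drop k))]
  rfl

end Summability

section Ah

variable [NeZero d] {C T : ℝ}

theorem summable_abs_mul_hfun_of_abs_le_pow (hC : 0 ≤ C) (hT : 0 ≤ T) {f : ETA d} {c : ℝ}
    (hc : 0 ≤ c) (hf : ∀ v, |f v| ≤ c ^ v.length) :
    Summable fun v : Word d => |f v| * hfun C T v := by
  have hmajorant := summable_comp_length (d := d)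
    (F := fun n => C * ((c * (1 + 2 * T)) ^ n / √((n - 1)! : ℝ))) (fun n => by positivity)
    (by simpa [← mul_assoc, mul_comm, mul_left_comm, mul_div_assoc, mul_pow] using
      (summable_pow_div_sqrt_factorial_pred (d * (c * (1 + 2 * T)))).mul_left C)
  refine hmajorant.of_nonneg_of_le (fun v => mul_nonneg (abs_nonneg _) (hfun_nonneg hC hT v))
    fun v => ?_
  calc |f v| * hfun C T v
      ≤ c ^ v.length * (C * (1 + 2 * T) ^ v.length / √((v.length - 1)! : ℝ)) :=
        mul_le_mul (hf v) (hfun_le_pow hC hT v) (hfun_nonneg hC hT v) (by positivity)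
    _ = _ := by rw [mul_pow]; ring

theorem summable_abs_concat_mul_hfun (hC : 2 ≤ C) (hT : 0 < T) {f g : ETA d}
    (hf : Summable fun v : Word d => |f v| * hfun C T v)
    (hg : Summable fun v : Word d => |g v| * hfun C T v) :
    Summable fun v : Word d => |concat f g v| * hfun C T v := by
  have hnonneg : ∀ v : Word d, 0 ≤ hfun C T v := hfun_nonneg (by linarith) hT.le
  have hF := hf.mul_of_nonneg hg (fun v => mul_nonneg (abs_nonneg _) (hnonneg v))
    fun v => mul_nonneg (abs_nonneg _) (hnonneg v)
  refine (summable_sum_take_drop hF).of_nonneg_of_le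
    (fun v => mul_nonneg (abs_nonneg _) (hnonneg v)) fun v => ?_
  calc |concat f g v| * hfun C T v
      ≤ (∑ k ∈ range (v.length + 1), |f (v.take k)| * |g (v.drop k)|) * hfun C T v := by
        gcongr; exacts [hnonneg v, abs_concat_le f g v]
    _ ≤ ∑ k ∈ range (v.length + 1), |f (v.take k)| * hfun C T (v.take k)
          * (|g (v.drop k)| * hfun C T (v.drop k)) := by
        rw [sum_mul]
        refine sum_le_sum fun k _ => ?_
        calc |f (v.take k)| * |g (v.drop k)| * hfun C T v
            ≤ |f (v.take k)| * |g (v.drop k)| * (hfun C T (v.take k) * hfun C T (v.drop k)) := by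
              gcongr
              simpa using hfun_append_le hC hT (v.take k) (v.drop k)
          _ = _ := by ring

end Ah

end ETA

/-- If `p ∈ A_h`, `q^∅ = 0` and `q` is dominated (coefficient-wise in
absolute value) by `a ⊗ exp^⧢(b)` or by `exp^⧢(b) ⊗ a` for linear combinations of single
letters `a, b`, then the resolvent `(∅-q)⁻¹` is well defined and lies in `A_h`, and the
unique solution `ℓ = p ⊗ (∅-q)⁻¹` of `ℓ = p + ℓ ⊗ q` lies in `A_h`. -/
theorem solution_mem_Ah (d : ℕ) [NeZero d] (C T : ℝ) (hC : 2 ≤ C) (hT : 0 < T)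
    (p q : ETA d)
    (hp : Summable (fun v : Word d => |p v| * hfun C T v))
    (hq0 : q [] = 0) (a b : Fin d → ℝ)
    (hdom :
      (∀ v : Word d, |q v| ≤ ETA.concat (ETA.letters a) (ETA.shuexp (ETA.letters b)) v) ∨
      (∀ v : Word d, |q v| ≤ ETA.concat (ETA.shuexp (ETA.letters b)) (ETA.letters a) v)) :
    (∀ v : Word d, Summable (fun n : ℕ => |ETA.cpow q n v|)) ∧
    Summable (fun v : Word d => |ETA.res q v| * hfun C T v) ∧
    (ETA.concat p (ETA.res q)
      = p + ETA.concat (ETA.concat p (ETA.res q)) q) ∧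
    Summable (fun v : Word d => |ETA.concat p (ETA.res q) v| * hfun C T v) := by
  have hq := ETA.abs_le_pow_of_dominated a b hdom
  have hres : Summable fun v : Word d => |ETA.res q v| * hfun C T v :=
    ETA.summable_abs_mul_hfun_of_abs_le_pow (by linarith) hT.le (by positivity)
      (ETA.abs_res_le_pow (by positivity) hq0 hq)
  refine ⟨fun v => summable_of_ne_finset_zero (s := Finset.range (v.length + 1)) fun n hn => ?_,
    hres, ETA.concat_res_eq hq0 p, ETA.summable_abs_concat_mul_hfun hC hT hp hres⟩
  rw [ETA.cpow_eq_zero_of_length_lt hq0 (by simpa using hn), abs_zero]
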